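/- Let M̂ be the Brylawski–Ziegler matroid union constructed from a rank-r matroid M on E with basis {1,…,r} and auxiliary sets A, B. If X is a cocircuit of M̂ with X ∩ B = ∅, then X ∩ E is a cocircuit of M. -/

import Mathlib

/-! Since `X` avoids `B = n + E₂`, a base of `M₂` made of loops of `M₁`, every base of `M₁`
together with `B` is a base of `M̂`, and every base of `M̂` contains a base of `M₁`; hence `X` is
already a cocircuit of `M₁`. In `M₁` each `n + i ∈ A` is parallel to `i`, so exchanging them shows
that a cocircuit containing `i` also contains `n + i`. Folding `n + i` back onto `i` maps bases of
`M₁` onto bases of `M`, and turns the minimality of `X` in `M₁` into that of `X ∩ E` in `M`. -/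

open Set Matroid
namespace NL
variable {γ : Type*}

/-- Rank of a set in a matroid: the max size of an independent subset. -/
noncomputable def rk (M : Matroid γ) (X : Set γ) : ℕ :=
  sSup {n | ∃ I, M.Indep I ∧ I ⊆ X ∧ I.ncard = n}

/-- A cocircuit: a minimal set meeting every base. -/
def Cocircuit (M : Matroid γ) (D : Set γ) : Prop :=
  D ⊆ M.E ∧ (∀ B, M.IsBase B → (D ∩ B).Nonempty) ∧
    ∀ D' ⊂ D, ∃ B, M.IsBase B ∧ D' ∩ B = ∅

/-- A loop: an element contained in no independent set. -/
def MLoop (M : Matroid γ) (e : γ) : Prop := e ∈ M.E ∧ ¬ M.Indep {e}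

/-- Parallel elements: distinct non-loops forming a dependent pair. -/
def MParallel (M : Matroid γ) (e f : γ) : Prop :=
  e ≠ f ∧ M.Indep {e} ∧ M.Indep {f} ∧ ¬ M.Indep {e, f}

/-- Deletion of the set `X`. -/
noncomputable def mdelete (M : Matroid γ) (X : Set γ) : Matroid γ := M ↾ (M.E \ X)

/-- Contraction of the set `X`, defined by duality. -/
noncomputable def mcontract (M : Matroid γ) (X : Set γ) : Matroid γ := (M✶ ↾ (M✶.E \ X))✶

/-- `X` is a union of cocircuits of `M` (equivalently, the complement of a flat). -/
def UnionOfCocircuits (M : Matroid γ) (X : Set γ) : Prop :=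
  ∃ S : Set (Set γ), (∀ D ∈ S, Cocircuit M D) ∧ X = ⋃₀ S

/-- The rank of `X` in the lattice of unions of cocircuits of `M` ordered by
inclusion: the maximal length of a chain from `∅` to `X` in this lattice. -/
noncomputable def latticeRk (M : Matroid γ) (X : Set γ) : ℕ :=
  sSup {k | ∃ c : Fin (k+1) → Set γ, StrictMono c ∧ (∀ i, UnionOfCocircuits M (c i)) ∧
    c 0 = ∅ ∧ c (Fin.last k) = X}

section general

variable {N : Matroid γ} {B X : Set γ} {e f : γ}

lemma MParallel.symm (h : MParallel N e f) : MParallel N f e :=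
  ⟨h.1.symm, h.2.2.1, h.2.1, by rw [pair_comm]; exact h.2.2.2⟩

lemma MParallel.mem_closure_singleton (h : MParallel N e f) : e ∈ N.closure {f} := by
  obtain ⟨hne, he, hf, hef⟩ := h
  rw [hf.mem_closure_iff_of_notMem hne]
  exact ⟨hef, insert_subset (he.subset_ground rfl) hf.subset_ground⟩

lemma MParallel.mem_closure_swap [DecidableEq γ] (h : MParallel N e f) {x : γ} (hx : x ∈ N.E) :
    x ∈ N.closure {Equiv.swap e f x} := by
  rcases eq_or_ne x e with rfl | hxe
  · simpa using h.mem_closure_singleton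
  rcases eq_or_ne x f with rfl | hxf
  · simpa using h.symm.mem_closure_singleton
  rw [Equiv.swap_apply_of_ne_of_ne hxe hxf]
  exact N.mem_closure_of_mem' rfl

lemma MLoop.isLoop (h : MLoop N e) : N.IsLoop e :=
  singleton_dep.1 ⟨h.2, singleton_subset_iff.2 h.1⟩

lemma _root_.Matroid.IsBase.image_of_mem_closure_singleton {φ : γ → γ} (hB : N.IsBase B)
    (hBfin : B.Finite) (hφ : InjOn φ B) (hcl : ∀ x ∈ B, x ∈ N.closure {φ x}) :
    N.IsBase (φ '' B) := by
  have hsub : B ⊆ N.closure (φ '' B) := fun x hx =>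
    N.closure_subset_closure (singleton_subset_iff.2 (mem_image_of_mem φ hx)) (hcl x hx)
  have hindep : N.Indep (φ '' B) := by
    refine (N.isRkFinite_of_finite (hBfin.image φ)).indep_of_encard_le_eRk ?_
    calc (φ '' B).encard = B.encard := hφ.encard_image
      _ = N.eRk B := hB.indep.eRk_eq_encard.symm
      _ ≤ N.eRk (N.closure (φ '' B)) := N.eRk_mono hsub
      _ = N.eRk (φ '' B) := N.eRk_closure_eq _
  refine hindep.isBase_of_ground_subset_closure ?_
  rw [← hB.closure_eq]
  exact N.closure_subset_closure_of_subset_closure hsub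

lemma cocircuit_of_forall_isBase (hmeet : ∀ B, N.IsBase B → (X ∩ B).Nonempty)
    (hmin : ∀ Y ⊂ X, ∃ B, N.IsBase B ∧ Y ∩ B = ∅) : Cocircuit N X := by
  refine ⟨fun x hx => ?_, hmeet, hmin⟩
  obtain ⟨B, hB, hXB⟩ := hmin (X \ {x}) (sdiff_singleton_ssubset.2 hx)
  obtain ⟨y, hyX, hyB⟩ := hmeet B hB
  have hyx : y = x := by
    by_contra hne
    exact (eq_empty_iff_forall_notMem.1 hXB) y ⟨⟨hyX, hne⟩, hyB⟩
  exact hB.subset_ground (hyx ▸ hyB)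

end general

section union

variable {Mu M₁ M₂ : Matroid γ}

def IsUnion (Mu M₁ M₂ : Matroid γ) : Prop :=
  ∀ I, Mu.Indep I ↔ ∃ I₁ I₂, M₁.Indep I₁ ∧ M₂.Indep I₂ ∧ I = I₁ ∪ I₂

lemma IsUnion.encard_le_of_indep (hU : IsUnion Mu M₁ M₂) {I : Set γ} (hI : Mu.Indep I) :
    I.encard ≤ M₁.eRank + M₂.eRank := by
  obtain ⟨I₁, I₂, h₁, h₂, rfl⟩ := (hU I).1 hI
  exact (encard_union_le I₁ I₂).trans (add_le_add h₁.encard_le_eRank h₂.encard_le_eRank)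

variable [M₁.RankFinite] [M₂.RankFinite]

lemma IsUnion.isBase_union (hU : IsUnion Mu M₁ M₂) {B₁ B₂ : Set γ} (h₁ : M₁.IsBase B₁)
    (h₂ : M₂.IsBase B₂) (hdisj : Disjoint B₁ B₂) : Mu.IsBase (B₁ ∪ B₂) := by
  have hcard : (B₁ ∪ B₂).encard = M₁.eRank + M₂.eRank := by
    rw [encard_union_eq hdisj, h₁.encard_eq_eRank, h₂.encard_eq_eRank]
  refine ((hU _).2 ⟨B₁, B₂, h₁.indep, h₂.indep, rfl⟩).isBase_of_maximal fun J hJ hsub => ?_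
  have hfin : (B₁ ∪ B₂).Finite := h₁.indep.finite.union h₂.indep.finite
  exact hfin.eq_of_subset_of_encard_le hsub (hcard ▸ hU.encard_le_of_indep hJ)

lemma isBase_left_of_isBase_union (hr : M₁.eRank + M₂.eRank ≤ Mu.eRank)
    {I₁ I₂ : Set γ} (hB : Mu.IsBase (I₁ ∪ I₂)) (h₁ : M₁.Indep I₁) (h₂ : M₂.Indep I₂) :
    M₁.IsBase I₁ := by
  refine h₁.isBase_of_eRk_ge h₁.finite ?_
  rw [h₁.eRk_eq_encard]
  have hle : M₁.eRank + M₂.eRank ≤ I₁.encard + M₂.eRank :=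
    calc M₁.eRank + M₂.eRank ≤ (I₁ ∪ I₂).encard := hB.encard_eq_eRank ▸ hr
      _ ≤ I₁.encard + I₂.encard := encard_union_le I₁ I₂
      _ ≤ I₁.encard + M₂.eRank := add_le_add_right h₂.encard_le_eRank _
  exact WithTop.le_of_add_le_add_right (M₂.eRank_ne_top_iff.2 inferInstance) hle

lemma IsUnion.cocircuit_of_cocircuit (hU : IsUnion Mu M₁ M₂) {B₂ X : Set γ}
    (hB₂ : M₂.IsBase B₂) (hB₂loops : B₂ ⊆ M₁.loops) (hX : Cocircuit Mu X) (hXB₂ : X ∩ B₂ = ∅) :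
    Cocircuit M₁ X := by
  have hdisj : ∀ J, M₁.IsBase J → Disjoint J B₂ := fun J hJ =>
    hJ.indep.disjoint_loops.mono_right hB₂loops
  have hr : M₁.eRank + M₂.eRank ≤ Mu.eRank := by
    obtain ⟨J, hJ⟩ := M₁.exists_isBase
    rw [← (hU.isBase_union hJ hB₂ (hdisj J hJ)).encard_eq_eRank,
      encard_union_eq (hdisj J hJ), hJ.encard_eq_eRank, hB₂.encard_eq_eRank]
  refine cocircuit_of_forall_isBase (fun J hJ => ?_) (fun Y hY => ?_)
  · obtain ⟨x, hxX, hxJ | hxB₂⟩ := hX.2.1 _ (hU.isBase_union hJ hB₂ (hdisj J hJ))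
    · exact ⟨x, hxX, hxJ⟩
    · exact absurd (hXB₂ ▸ ⟨hxX, hxB₂⟩ : x ∈ (∅ : Set γ)) (notMem_empty x)
  · obtain ⟨B, hB, hYB⟩ := hX.2.2 Y hY
    obtain ⟨I₁, I₂, h₁, h₂, rfl⟩ := (hU B).1 hB.indep
    exact ⟨I₁, isBase_left_of_isBase_union hr hB h₁ h₂,
      subset_empty_iff.1 (hYB ▸ inter_subset_inter_right Y subset_union_left)⟩

end union

section parallelExtension

structure IsParallelExtension (n : ℕ) (S : Set ℕ) (N M : Matroid ℕ) : Prop where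
  ground_eq : N.E = Icc 1 (2 * n)
  restrict_eq : N ↾ Icc 1 n = M
  parallel : ∀ i ∈ S, MParallel N i (n + i)
  loop : ∀ i ∈ Icc 1 n \ S, MLoop N (n + i)

def fold (n x : ℕ) : ℕ := if x ≤ n then x else x - n

lemma fold_cases (n x : ℕ) : (x ≤ n ∧ fold n x = x) ∨ (n < x ∧ n + fold n x = x) := by
  unfold fold
  split_ifs <;> omega

variable {n i : ℕ} {S : Set ℕ} {N M : Matroid ℕ} {B I X : Set ℕ}

lemma IsParallelExtension.finite (h : IsParallelExtension n S N M) : N.Finite :=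
  ⟨h.ground_eq ▸ finite_Icc _ _⟩

lemma IsParallelExtension.indep_of_indep (h : IsParallelExtension n S N M) (hI : M.Indep I) :
    N.Indep I := by
  rw [← h.restrict_eq] at hI
  exact hI.of_restrict

lemma IsParallelExtension.mem_of_add_mem (h : IsParallelExtension n S N M) (hI : N.Indep I)
    (hi : 0 < i) (hiI : n + i ∈ I) : i ∈ S := by
  by_contra hiS
  have hiE : n + i ∈ Icc 1 (2 * n) := h.ground_eq ▸ hI.subset_ground hiI
  have hi' : i ∈ Icc 1 n \ S := ⟨⟨hi, by simp only [mem_Icc] at hiE; omega⟩, hiS⟩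
  exact (h.loop i hi').2 (hI.subset (singleton_subset_iff.2 hiI))

lemma IsParallelExtension.fold_mem (h : IsParallelExtension n S N M) (hI : N.Indep I) {x : ℕ}
    (hxI : x ∈ I) (hnx : n < x) : fold n x ∈ S ∧ n + fold n x = x := by
  have hx := (fold_cases n x).resolve_left (by omega)
  exact ⟨h.mem_of_add_mem hI (by omega) (by rw [hx.2]; exact hxI), hx.2⟩

lemma IsParallelExtension.injOn_fold (h : IsParallelExtension n S N M) (hI : N.Indep I) :
    InjOn (fold n) I := by
  intro x hx y hy hxy
  by_contra hne
  wlog hlt : x < y generalizing x y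
  · exact this hy hx hxy.symm (Ne.symm hne) (by omega)
  rcases fold_cases n x with ⟨hxn, hfx⟩ | ⟨hxn, hfx⟩ <;>
    rcases fold_cases n y with ⟨hyn, hfy⟩ | ⟨hyn, hfy⟩
  all_goals try omega
  obtain ⟨hS, hy'⟩ := h.fold_mem hI hy hyn
  refine (h.parallel _ hS).2.2.2 (hI.subset ?_)
  rw [hy', ← hxy, hfx]
  exact pair_subset hx hy

lemma IsParallelExtension.isBase_image_fold (h : IsParallelExtension n S N M)
    (hB : N.IsBase B) : M.IsBase (fold n '' B) := by
  have hBE : B ⊆ Icc 1 (2 * n) := h.ground_eq ▸ hB.subset_ground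
  have hcl : ∀ x ∈ B, x ∈ N.closure {fold n x} := by
    intro x hx
    rcases fold_cases n x with ⟨-, hfx⟩ | ⟨hxn, -⟩
    · rw [hfx]
      exact N.mem_closure_of_mem' rfl (hB.subset_ground hx)
    · obtain ⟨hS, hx'⟩ := h.fold_mem hB.indep hx hxn
      simpa [hx'] using (h.parallel _ hS).symm.mem_closure_singleton
  have hsub : fold n '' B ⊆ Icc 1 n := by
    rintro _ ⟨x, hx, rfl⟩
    have := hBE hx
    simp only [mem_Icc] at this ⊢
    rcases fold_cases n x with hfx | hfx <;> omega
  have hN := hB.image_of_mem_closure_singleton ((finite_Icc _ _).subset hBE)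
    (h.injOn_fold hB.indep) hcl
  rw [← h.restrict_eq, isBase_restrict_iff']
  have hE : Icc 1 n ⊆ N.E := h.ground_eq ▸ Icc_subset_Icc le_rfl (by omega)
  exact (hN.isBasis_of_subset hE hsub).isBasis'

lemma IsParallelExtension.isBase_of_isBase (h : IsParallelExtension n S N M) (hB : M.IsBase B) :
    N.IsBase B := by
  obtain ⟨B', hB', hBB'⟩ := (h.indep_of_indep hB.indep).exists_isBase_superset
  have hBfin : B.Finite := (finite_Icc 1 n).subset (by
    rw [← h.restrict_eq] at hB
    exact hB.subset_ground)
  have hcard : B'.encard ≤ B.encard := by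
    rw [hB.encard_eq_encard_of_isBase (h.isBase_image_fold hB'),
      (h.injOn_fold hB'.indep).encard_image]
  rwa [hBfin.eq_of_subset_of_encard_le hBB' hcard]

lemma IsParallelExtension.isBase_image_add (h : IsParallelExtension n S N M) (hB : M.IsBase B)
    (hBS : B ⊆ S) : N.IsBase ((n + ·) '' B) :=
  (h.isBase_of_isBase hB).image_of_mem_closure_singleton
    (h.finite.ground_finite.subset (h.isBase_of_isBase hB).subset_ground)
    (add_right_injective n).injOn
    (fun x hx => (h.parallel x (hBS hx)).mem_closure_singleton)

lemma IsParallelExtension.add_mem_of_cocircuit (h : IsParallelExtension n S N M)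
    (hX : Cocircuit N X) (hiS : i ∈ S) (hiX : i ∈ X) : n + i ∈ X := by
  by_contra hniX
  obtain ⟨B, hB, hXB⟩ := hX.2.2 (X \ {i}) (sdiff_singleton_ssubset.2 hiX)
  have hXB' : ∀ x ∈ X, x ∈ B → x = i := fun x hxX hxB => by
    by_contra hne
    exact (eq_empty_iff_forall_notMem.1 hXB) x ⟨⟨hxX, hne⟩, hxB⟩
  by_cases hiB : i ∈ B
  · -- exchanging `i` for its parallel copy gives a base avoiding `X`
    have hpar := h.parallel i hiS
    have hniB : n + i ∉ B := fun hniB => hpar.2.2.2 (hB.indep.subset (pair_subset hiB hniB))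
    have hB' := hB.image_of_mem_closure_singleton (h.finite.ground_finite.subset hB.subset_ground)
      (Equiv.injective _).injOn (fun x hx => hpar.mem_closure_swap (hB.subset_ground hx))
    obtain ⟨_, hyX, y, hyB, rfl⟩ := hX.2.1 _ hB'
    rcases eq_or_ne y i with rfl | hyi
    · exact hniX (by simpa using hyX)
    have hyn : y ≠ n + i := fun hyn => hniB (hyn ▸ hyB)
    rw [Equiv.swap_apply_of_ne_of_ne hyi hyn] at hyX
    exact hyi (hXB' y hyX hyB)
  · obtain ⟨x, hxX, hxB⟩ := hX.2.1 B hB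
    exact hiB (hXB' x hxX hxB ▸ hxB)

lemma IsParallelExtension.cocircuit_inter (h : IsParallelExtension n S N M)
    (hX : Cocircuit N X) : Cocircuit M (X ∩ Icc 1 n) := by
  refine cocircuit_of_forall_isBase (fun B hB => ?_) (fun D hD => ?_)
  · obtain ⟨x, hxX, hxB⟩ := hX.2.1 B (h.isBase_of_isBase hB)
    have hxE : x ∈ Icc 1 n := by
      rw [← h.restrict_eq] at hB
      exact hB.subset_ground hxB
    exact ⟨x, ⟨hxX, hxE⟩, hxB⟩
  · have hY : D ∪ (X \ Icc 1 n) ⊂ X := by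
      obtain ⟨z, hz, hzD⟩ := exists_of_ssubset hD
      refine (ssubset_iff_of_subset
        (union_subset (hD.subset.trans inter_subset_left) sdiff_subset)).2 ⟨z, hz.1, ?_⟩
      rintro (hz' | hz')
      exacts [hzD hz', hz'.2 hz.2]
    obtain ⟨B, hB, hYB⟩ := hX.2.2 _ hY
    refine ⟨fold n '' B, h.isBase_image_fold hB, eq_empty_iff_forall_notMem.2 ?_⟩
    rintro _ ⟨hxD, y, hyB, rfl⟩
    -- a copy `n + i ∈ B` of `i ∈ D` lies in `X` as well
    have hyY : y ∈ D ∪ (X \ Icc 1 n) := by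
      rcases fold_cases n y with ⟨-, hfy⟩ | ⟨hyn, -⟩
      · exact Or.inl (hfy ▸ hxD)
      · obtain ⟨hS, hy⟩ := h.fold_mem hB.indep hyB hyn
        refine Or.inr ⟨hy ▸ h.add_mem_of_cocircuit hX hS (hD.subset hxD).1, ?_⟩
        simp only [mem_Icc]
        omega
    exact (eq_empty_iff_forall_notMem.1 hYB) y ⟨hyY, hyB⟩

end parallelExtension

theorem bz_cocircuit_restricts_general
    (n r : ℕ) (M M₁ M₂ Mhat : Matroid ℕ)
    (hME : M.E = Set.Icc 1 n) (hMB : M.IsBase (Set.Icc 1 r))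
    (hE1 : M₁.E = Set.Icc 1 (2*n)) (hres1 : M₁ ↾ (Set.Icc 1 n) = M)
    (hpar1 : ∀ i ∈ Set.Icc 1 r, MParallel M₁ i (n+i))
    (hloop1 : ∀ i ∈ Set.Icc (r+1) n, MLoop M₁ (n+i))
    (hE2 : M₂.E = Set.Icc 1 (2*n)) (hres2 : M₂ ↾ (Set.Icc 1 n) = M✶)
    (hpar2 : ∀ i ∈ Set.Icc (r+1) n, MParallel M₂ i (n+i))
    (hloop2 : ∀ i ∈ Set.Icc 1 r, MLoop M₂ (n+i))
    (hU : ∀ I, Mhat.Indep I ↔ ∃ I₁ I₂, M₁.Indep I₁ ∧ M₂.Indep I₂ ∧ I = I₁ ∪ I₂)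
    (X : Set ℕ) (hX : Cocircuit Mhat X) (hXB : X ∩ Set.Icc (n+r+1) (2*n) = ∅) :
    Cocircuit M (X ∩ Set.Icc 1 n) := by
  have h₁ : IsParallelExtension n (Icc 1 r) M₁ M :=
    ⟨hE1, hres1, hpar1, fun i hi => hloop1 i (by simp only [mem_sdiff, mem_Icc] at hi ⊢; omega)⟩
  have h₂ : IsParallelExtension n (Icc (r + 1) n) M₂ M✶ :=
    ⟨hE2, hres2, hpar2, fun i hi => hloop2 i (by simp only [mem_sdiff, mem_Icc] at hi ⊢; omega)⟩
  have := h₁.finite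
  have := h₂.finite
  have hdualB : M✶.IsBase (Icc (r + 1) n) := by
    convert hMB.compl_isBase_dual using 1
    ext x
    simp only [hME, mem_sdiff, mem_Icc]
    omega
  have hBeq : (n + ·) '' Icc (r + 1) n = Icc (n + r + 1) (2 * n) := by
    rw [image_const_add_Icc, two_mul, add_assoc]
  have hBloops : (n + ·) '' Icc (r + 1) n ⊆ M₁.loops := by
    rintro _ ⟨i, hi, rfl⟩
    exact (hloop1 i hi).isLoop
  exact h₁.cocircuit_inter (IsUnion.cocircuit_of_cocircuit hU (h₂.isBase_image_add hdualB le_rfl)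
    hBloops hX (hBeq ▸ hXB))

/-- if `X` is a cocircuit of `M̂` with `X ∩ B = ∅`, then
`X ∩ E` is a cocircuit of `M`. -/
theorem bz_cocircuit_restricts
    (n r : ℕ) (hrn : r ≤ n) (M M₁ M₂ Mhat : Matroid ℕ)
    (hME : M.E = Set.Icc 1 n) (hMB : M.IsBase (Set.Icc 1 r))
    (hE1 : M₁.E = Set.Icc 1 (2*n)) (hres1 : M₁ ↾ (Set.Icc 1 n) = M)
    (hpar1 : ∀ i ∈ Set.Icc 1 r, MParallel M₁ i (n+i))
    (hloop1 : ∀ i ∈ Set.Icc (r+1) n, MLoop M₁ (n+i))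
    (hE2 : M₂.E = Set.Icc 1 (2*n)) (hres2 : M₂ ↾ (Set.Icc 1 n) = M✶)
    (hpar2 : ∀ i ∈ Set.Icc (r+1) n, MParallel M₂ i (n+i))
    (hloop2 : ∀ i ∈ Set.Icc 1 r, MLoop M₂ (n+i))
    (hEh : Mhat.E = Set.Icc 1 (2*n))
    (hU : ∀ I, Mhat.Indep I ↔ ∃ I₁ I₂, M₁.Indep I₁ ∧ M₂.Indep I₂ ∧ I = I₁ ∪ I₂)
    (X : Set ℕ) (hX : Cocircuit Mhat X) (hXB : X ∩ Set.Icc (n+r+1) (2*n) = ∅) :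
    Cocircuit M (X ∩ Set.Icc 1 n) :=
  bz_cocircuit_restricts_general n r M M₁ M₂ Mhat hME hMB hE1 hres1 hpar1 hloop1 hE2 hres2 hpar2
    hloop2 hU X hX hXB

end NL
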